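/- arXiv:1108.0835 — 2 statements merged into one kernel-verified Lean document; each statement's English description precedes it below -/
import Mathlib

section
/- Let φ be twice continuously differentiable on a compact interval I = [x₁, x₂] with φ''(x) > 0 for all x ∈ I. Then there exists a finite constant μ such that √Dφ is left-sided μ-defective on I: for all a, b, q ∈ I, |√Dφ(q,a) − √Dφ(q,b)| ≤ μ·√Dφ(a,b). -/
/-- The one-dimensional Bregman divergence `Dφ(x,y) = φ(x) − φ(y) − φ'(y)(x−y)`. -/
noncomputable def bregman (φ : ℝ → ℝ) (x y : ℝ) : ℝ :=
  φ x - φ y - deriv φ y * (x - y)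

/-! Where `m ≤ φ'' ≤ M` with `0 < m`, convexity of `φ - c t² / 2` squeezes `Dφ(x,y)` between
`m/2 (x-y)²` and `M/2 (x-y)²`. The identity `Dφ(q,a) - Dφ(q,b) = Dφ(b,a) + (φ'(b) - φ'(a))(q - b)`
then bounds `|Dφ(q,a) - Dφ(q,b)|` by `3M/2 |a-b| (|q-a| + |q-b|)`, while
`√Dφ(q,a) + √Dφ(q,b) ≥ √(m/2) (|q-a| + |q-b|)` and `√Dφ(a,b) ≥ √(m/2) |a-b|`. Writing
`|√X - √Y| = |X - Y| / (√X + √Y)` gives `μ = 3M/m`; on a compact interval, `m` and `M` are the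
extreme values of `φ''`. -/

theorem ConvexOn.bregman_nonneg {f : ℝ → ℝ} {s : Set ℝ} {x y : ℝ} (hf : ConvexOn ℝ s f)
    (hx : x ∈ s) (hy : y ∈ s) (hfy : DifferentiableAt ℝ f y) : 0 ≤ bregman f x y := by
  unfold bregman
  rcases lt_trichotomy x y with hxy | rfl | hxy
  · have h := hf.slope_le_deriv hx hy hxy hfy
    rw [slope_def_field, div_le_iff₀ (sub_pos.mpr hxy)] at h
    linarith
  · simp
  · have h := hf.deriv_le_slope hy hx hxy hfy
    rw [slope_def_field, le_div_iff₀ (sub_pos.mpr hxy)] at h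
    linarith

theorem bregman_neg (φ : ℝ → ℝ) (x y : ℝ) : bregman (-φ) x y = -bregman φ x y := by
  simp only [bregman, Pi.neg_apply, deriv.neg]
  ring

theorem bregman_sub_bregman (φ : ℝ → ℝ) (q a b : ℝ) :
    bregman φ q a - bregman φ q b = bregman φ b a + (deriv φ b - deriv φ a) * (q - b) := by
  simp only [bregman]
  ring

section

variable {φ : ℝ → ℝ} {s : Set ℝ} {x y : ℝ}

theorem mul_sq_le_bregman (hs : Convex ℝ s) (hd1 : Differentiable ℝ φ)
    (hd2 : Differentiable ℝ (deriv φ)) {c : ℝ} (hc : ∀ t ∈ s, c ≤ deriv (deriv φ) t)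
    (hx : x ∈ s) (hy : y ∈ s) : c / 2 * (x - y) ^ 2 ≤ bregman φ x y := by
  set g : ℝ → ℝ := fun t => φ t - c / 2 * t ^ 2
  have hg : ∀ t, HasDerivAt g (deriv φ t - c * t) t := fun t =>
    ((hd1 t).hasDerivAt.sub ((hasDerivAt_pow 2 t).const_mul (c / 2))).congr_deriv (by ring)
  have hg' : ∀ t, HasDerivAt (fun t => deriv φ t - c * t) (deriv (deriv φ) t - c) t := fun t =>
    ((hd2 t).hasDerivAt.sub ((hasDerivAt_id t).const_mul c)).congr_deriv (by ring)
  have hconv : ConvexOn ℝ s g :=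
    convexOn_of_hasDerivWithinAt2_nonneg hs
      (fun t _ => (hg t).continuousAt.continuousWithinAt)
      (fun t _ => (hg t).hasDerivWithinAt) (fun t _ => (hg' t).hasDerivWithinAt)
      (fun t ht => sub_nonneg.mpr (hc t (interior_subset ht)))
  have h := hconv.bregman_nonneg hx hy (hg y).differentiableAt
  simp only [bregman, g, (hg y).deriv] at h ⊢
  linarith

theorem bregman_le_mul_sq (hs : Convex ℝ s) (hd1 : Differentiable ℝ φ)
    (hd2 : Differentiable ℝ (deriv φ)) {C : ℝ} (hC : ∀ t ∈ s, deriv (deriv φ) t ≤ C)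
    (hx : x ∈ s) (hy : y ∈ s) : bregman φ x y ≤ C / 2 * (x - y) ^ 2 := by
  have h := mul_sq_le_bregman (φ := -φ) (c := -C) hs hd1.neg
    (by rw [deriv.neg']; exact hd2.neg)
    (fun t ht => by simpa only [deriv.neg', deriv.fun_neg, neg_le_neg_iff] using hC t ht) hx hy
  rw [bregman_neg] at h
  linarith

theorem sqrt_mul_abs_le_sqrt_bregman (hs : Convex ℝ s) (hd1 : Differentiable ℝ φ)
    (hd2 : Differentiable ℝ (deriv φ)) {c : ℝ} (hc0 : 0 ≤ c) (hc : ∀ t ∈ s, c ≤ deriv (deriv φ) t)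
    (hx : x ∈ s) (hy : y ∈ s) : √(c / 2) * |x - y| ≤ √(bregman φ x y) :=
  calc √(c / 2) * |x - y| = √(c / 2 * (x - y) ^ 2) := by
        rw [Real.sqrt_mul (by positivity), Real.sqrt_sq_eq_abs]
    _ ≤ √(bregman φ x y) := Real.sqrt_le_sqrt (mul_sq_le_bregman hs hd1 hd2 hc hx hy)

theorem abs_bregman_le (hs : Convex ℝ s) (hd1 : Differentiable ℝ φ)
    (hd2 : Differentiable ℝ (deriv φ)) {M : ℝ} (hM : ∀ t ∈ s, |deriv (deriv φ) t| ≤ M)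
    (hx : x ∈ s) (hy : y ∈ s) : |bregman φ x y| ≤ M / 2 * (x - y) ^ 2 := by
  have hlow := mul_sq_le_bregman hs hd1 hd2 (fun t ht => (abs_le.mp (hM t ht)).1) hx hy
  refine abs_le.mpr ⟨by linarith, ?_⟩
  exact bregman_le_mul_sq hs hd1 hd2 (fun t ht => (abs_le.mp (hM t ht)).2) hx hy

theorem abs_bregman_sub_bregman_le (hs : Convex ℝ s) (hd1 : Differentiable ℝ φ)
    (hd2 : Differentiable ℝ (deriv φ)) {M : ℝ} (hM : ∀ t ∈ s, |deriv (deriv φ) t| ≤ M)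
    {a b q : ℝ} (ha : a ∈ s) (hb : b ∈ s) :
    |bregman φ q a - bregman φ q b| ≤ M * |a - b| * (|a - b| / 2 + |q - b|) := by
  have hlip : |deriv φ b - deriv φ a| ≤ M * |b - a| := by
    simpa only [Real.norm_eq_abs] using
      hs.norm_image_sub_le_of_norm_deriv_le (fun t _ => hd2 t) hM ha hb
  rw [bregman_sub_bregman]
  calc |bregman φ b a + (deriv φ b - deriv φ a) * (q - b)|
      ≤ |bregman φ b a| + |deriv φ b - deriv φ a| * |q - b| :=
        (abs_add_le _ _).trans_eq (by rw [abs_mul])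
    _ ≤ M / 2 * (b - a) ^ 2 + M * |b - a| * |q - b| := by
        gcongr
        exact abs_bregman_le hs hd1 hd2 hM hb ha
    _ = M * |a - b| * (|a - b| / 2 + |q - b|) := by
        rw [← sq_abs, abs_sub_comm b a]
        ring

end

theorem Real.abs_sqrt_sub_sqrt_mul_add {x y : ℝ} (hx : 0 ≤ x) (hy : 0 ≤ y) :
    |√x - √y| * (√x + √y) = |x - y| := by
  rw [← abs_of_nonneg (by positivity : 0 ≤ √x + √y), ← abs_mul,
    show (√x - √y) * (√x + √y) = √x ^ 2 - √y ^ 2 by ring, Real.sq_sqrt hx, Real.sq_sqrt hy]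

theorem abs_sqrt_bregman_sub_le {φ : ℝ → ℝ} {s : Set ℝ} (hs : Convex ℝ s)
    (hd1 : Differentiable ℝ φ) (hd2 : Differentiable ℝ (deriv φ)) {m M : ℝ} (hm : 0 < m)
    (hlow : ∀ t ∈ s, m ≤ deriv (deriv φ) t) (hup : ∀ t ∈ s, deriv (deriv φ) t ≤ M)
    {a b q : ℝ} (ha : a ∈ s) (hb : b ∈ s) (hq : q ∈ s) :
    |√(bregman φ q a) - √(bregman φ q b)| ≤ 3 * M / m * √(bregman φ a b) := by
  set k := √(m / 2)
  have hk : 0 < k := Real.sqrt_pos.mpr (by positivity)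
  have hk2 : k ^ 2 = m / 2 := Real.sq_sqrt (by positivity)
  have hD0 : ∀ x ∈ s, ∀ y ∈ s, 0 ≤ bregman φ x y := fun x hx y hy =>
    (by positivity : 0 ≤ m / 2 * (x - y) ^ 2).trans (mul_sq_le_bregman hs hd1 hd2 hlow hx hy)
  have hsqrt : ∀ x ∈ s, ∀ y ∈ s, k * |x - y| ≤ √(bregman φ x y) := fun x hx y hy =>
    sqrt_mul_abs_le_sqrt_bregman hs hd1 hd2 hm.le hlow hx hy
  have hM : ∀ t ∈ s, |deriv (deriv φ) t| ≤ M := fun t ht =>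
    abs_le.mpr ⟨by linarith [hlow t ht, hup t ht], hup t ht⟩
  have hM0 : 0 ≤ M := (abs_nonneg _).trans (hM a ha)
  have hμ : 0 ≤ 3 * M / m := by positivity
  rcases eq_or_ne a b with rfl | hab
  · simpa only [sub_self, abs_zero] using mul_nonneg hμ (Real.sqrt_nonneg _)
  set S := |q - a| + |q - b|
  have htri : |a - b| ≤ S := by
    simpa only [abs_sub_comm a q] using abs_sub_le a q b
  have hS : k * S ≤ √(bregman φ q a) + √(bregman φ q b) := by
    rw [mul_add]
    exact add_le_add (hsqrt q hq a ha) (hsqrt q hq b hb)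
  have hpos : 0 < √(bregman φ q a) + √(bregman φ q b) :=
    (mul_pos hk ((abs_pos.mpr (sub_ne_zero.mpr hab)).trans_le htri)).trans_le hS
  refine le_of_mul_le_mul_right ?_ hpos
  calc |√(bregman φ q a) - √(bregman φ q b)| * (√(bregman φ q a) + √(bregman φ q b))
      = |bregman φ q a - bregman φ q b| :=
        Real.abs_sqrt_sub_sqrt_mul_add (hD0 q hq a ha) (hD0 q hq b hb)
    _ ≤ M * |a - b| * (|a - b| / 2 + |q - b|) := abs_bregman_sub_bregman_le hs hd1 hd2 hM ha hb
    _ ≤ M * |a - b| * (3 / 2 * S) := by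
        gcongr
        linarith [abs_nonneg (q - a)]
    _ = 3 * M / m * (k * |a - b|) * (k * S) := by
        rw [show 3 * M / m * (k * |a - b|) * (k * S) = 3 * M / m * k ^ 2 * |a - b| * S by ring,
          hk2]
        field_simp
    _ ≤ 3 * M / m * √(bregman φ a b) * (√(bregman φ q a) + √(bregman φ q b)) := by
        gcongr
        exact hsqrt a ha b hb

theorem sqrt_bregman_left_mu_defective (φ : ℝ → ℝ) (x₁ x₂ : ℝ)
    (hd1 : Differentiable ℝ φ) (hd2 : Differentiable ℝ (deriv φ))
    (hcont : ContinuousOn (deriv (deriv φ)) (Set.Icc x₁ x₂))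
    (hpos : ∀ x ∈ Set.Icc x₁ x₂, 0 < deriv (deriv φ) x) :
    ∃ μ : ℝ, ∀ a ∈ Set.Icc x₁ x₂, ∀ b ∈ Set.Icc x₁ x₂, ∀ q ∈ Set.Icc x₁ x₂,
      |Real.sqrt (bregman φ q a) - Real.sqrt (bregman φ q b)| ≤
        μ * Real.sqrt (bregman φ a b) := by
  rcases (Set.Icc x₁ x₂).eq_empty_or_nonempty with hI | hI
  · exact ⟨0, by simp [hI]⟩
  obtain ⟨ξ, hξ, hmin⟩ := isCompact_Icc.exists_isMinOn hI hcont
  obtain ⟨η, -, hmax⟩ := isCompact_Icc.exists_isMaxOn hI hcont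
  exact ⟨3 * deriv (deriv φ) η / deriv (deriv φ) ξ, fun a ha b hb q hq =>
    abs_sqrt_bregman_sub_le (convex_Icc x₁ x₂) hd1 hd2 (hpos ξ hξ) (fun t ht => hmin ht)
      (fun t ht => hmax ht) ha hb hq⟩
end

section
/- Let φ : ℝ → ℝ be differentiable and strictly convex, with Bregman divergence Dφ. Let a ≤ b with √Dφ(a,b) = s, let ℓ > 0, and let I be a finite collection of pairwise disjoint closed intervals [x, x'], each intersecting [a,b] and each satisfying √Dφ(x,x') ≥ ℓ. Then the number of intervals in I is at most s²/ℓ² + 2. -/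
open Set

theorem sum_le_of_superadditive_of_pairwiseDisjoint {f : ℝ → ℝ → ℝ} (hnonneg : ∀ x y, 0 ≤ f x y)
    (hsuper : ∀ x y z, x ≤ y → y ≤ z → f x y + f y z ≤ f x z) {a c : ℝ} {J : Finset (ℝ × ℝ)}
    (hdisj : (J : Set (ℝ × ℝ)).PairwiseDisjoint (fun p ↦ Icc p.1 p.2))
    (hle : ∀ p ∈ J, p.1 ≤ p.2) (hsub : ∀ p ∈ J, a ≤ p.1 ∧ p.2 ≤ c) :
    ∑ p ∈ J, f p.1 p.2 ≤ f a c := by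
  induction J using Finset.induction_on_max_value (fun p : ℝ × ℝ ↦ p.2) generalizing c with
  | empty => simpa using hnonneg a c
  | insert p J hpJ hmax ih =>
    rw [Finset.coe_insert, pairwiseDisjoint_insert] at hdisj
    have hp := Finset.mem_insert_self p J
    have hmem (q) (hq : q ∈ J) : q ∈ insert p J := Finset.mem_insert_of_mem hq
    -- `q` ends no later than `p`; if it ended after `p` starts, `max p.1 q.1` would lie in both
    have hbefore : ∀ q ∈ J, q.2 ≤ p.1 := by
      intro q hq
      by_contra! hlt
      refine disjoint_left.mp (hdisj.2 q hq (ne_of_mem_of_not_mem hq hpJ).symm)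
        ⟨le_max_left p.1 q.1, max_le (hle p hp) (hle q (hmem q hq) |>.trans (hmax q hq))⟩
        ⟨le_max_right p.1 q.1, max_le hlt.le (hle q (hmem q hq))⟩
    have hJ := ih hdisj.1 (fun q hq ↦ hle q (hmem q hq))
      (fun q hq ↦ ⟨(hsub q (hmem q hq)).1, hbefore q hq⟩)
    have hap := (hsub p hp).1
    calc ∑ q ∈ insert p J, f q.1 q.2 = ∑ q ∈ J, f q.1 q.2 + f p.1 p.2 := by
          rw [Finset.sum_insert hpJ, add_comm]
      _ ≤ f a p.1 + f p.1 p.2 := by gcongr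
      _ ≤ f a p.2 + f p.2 c := by linarith [hsuper _ _ _ hap (hle p hp), hnonneg p.2 c]
      _ ≤ f a c := hsuper _ _ _ (hap.trans (hle p hp)) (hsub p hp).2

section Bregman

theorem bregman_add_bregman (φ : ℝ → ℝ) (x y z : ℝ) :
    bregman φ x y + bregman φ y z = bregman φ x z - (deriv φ z - deriv φ y) * (y - x) := by
  unfold bregman
  ring

variable {φ : ℝ → ℝ}

theorem bregman_nonneg (hφ : ConvexOn ℝ univ φ) {y : ℝ} (hd : DifferentiableAt ℝ φ y) (x : ℝ) :
    0 ≤ bregman φ x y := by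
  unfold bregman
  rcases lt_trichotomy x y with hxy | rfl | hyx
  · have := hφ.slope_le_deriv (mem_univ x) (mem_univ y) hxy hd
    rw [slope_def_field, div_le_iff₀ (sub_pos.mpr hxy)] at this
    linarith
  · simp
  · have := hφ.deriv_le_slope (mem_univ y) (mem_univ x) hyx hd
    rw [slope_def_field, le_div_iff₀ (sub_pos.mpr hyx)] at this
    linarith

theorem bregman_add_bregman_le (hφ : ConvexOn ℝ univ φ) (hd : Differentiable ℝ φ) {x y z : ℝ}
    (hxy : x ≤ y) (hyz : y ≤ z) : bregman φ x y + bregman φ y z ≤ bregman φ x z := by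
  have hderiv : deriv φ y ≤ deriv φ z :=
    hφ.monotoneOn_deriv (fun w _ ↦ hd w) (mem_univ y) (mem_univ z) hyz
  rw [bregman_add_bregman]
  nlinarith

theorem sum_bregman_le_of_pairwiseDisjoint (hφ : ConvexOn ℝ univ φ) (hd : Differentiable ℝ φ)
    {a c : ℝ} {J : Finset (ℝ × ℝ)}
    (hdisj : (J : Set (ℝ × ℝ)).PairwiseDisjoint (fun p ↦ Icc p.1 p.2))
    (hle : ∀ p ∈ J, p.1 ≤ p.2) (hsub : ∀ p ∈ J, a ≤ p.1 ∧ p.2 ≤ c) :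
    ∑ p ∈ J, bregman φ p.1 p.2 ≤ bregman φ a c :=
  sum_le_of_superadditive_of_pairwiseDisjoint (fun x y ↦ bregman_nonneg hφ (hd y) x)
    (fun _ _ _ ↦ bregman_add_bregman_le hφ hd) hdisj hle hsub

end Bregman

theorem card_filter_mem_Icc_le_one {I : Finset (ℝ × ℝ)}
    (hdisj : (I : Set (ℝ × ℝ)).PairwiseDisjoint (fun p ↦ Icc p.1 p.2)) (x : ℝ) :
    (I.filter (fun p ↦ x ∈ Icc p.1 p.2)).card ≤ 1 := by
  refine Finset.card_le_one.mpr fun p hp q hq ↦ ?_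
  rw [Finset.mem_filter] at hp hq
  exact hdisj.elim hp.1 hq.1 (not_disjoint_iff.mpr ⟨x, hp.2, hq.2⟩)

theorem card_le_card_filter_subset_add_two {a b : ℝ} {I : Finset (ℝ × ℝ)}
    (hdisj : (I : Set (ℝ × ℝ)).PairwiseDisjoint (fun p ↦ Icc p.1 p.2))
    (hinter : ∀ p ∈ I, (Icc p.1 p.2 ∩ Icc a b).Nonempty) :
    I.card ≤ (I.filter (fun p ↦ a ≤ p.1 ∧ p.2 ≤ b)).card + 2 := by
  have hcover : I ⊆ I.filter (fun p ↦ a ≤ p.1 ∧ p.2 ≤ b) ∪ I.filter (fun p ↦ a ∈ Icc p.1 p.2) ∪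
      I.filter (fun p ↦ b ∈ Icc p.1 p.2) := by
    intro p hp
    obtain ⟨t, ⟨hpt, htp⟩, hat, htb⟩ := hinter p hp
    simp only [Finset.mem_union, Finset.mem_filter, mem_Icc, hp, true_and]
    rcases lt_or_ge p.1 a with hpa | hap
    · exact Or.inl (Or.inr ⟨hpa.le, hat.trans htp⟩)
    rcases lt_or_ge b p.2 with hbp | hpb
    · exact Or.inr ⟨hpt.trans htb, hbp.le⟩
    · exact Or.inl (Or.inl ⟨hap, hpb⟩)
  grw [Finset.card_le_card hcover, Finset.card_union_le, Finset.card_union_le,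
    card_filter_mem_Icc_le_one hdisj a, card_filter_mem_Icc_le_one hdisj b]

theorem weak_interval_packing_general (φ : ℝ → ℝ) (hdiff : Differentiable ℝ φ)
    (hconv : StrictConvexOn ℝ Set.univ φ)
    (a b s ℓ : ℝ) (hs : Real.sqrt (bregman φ a b) = s) (hℓ : 0 < ℓ)
    (I : Finset (ℝ × ℝ))
    (hdisj : ∀ p ∈ I, ∀ q ∈ I, p ≠ q → Disjoint (Set.Icc p.1 p.2) (Set.Icc q.1 q.2))
    (hinter : ∀ p ∈ I, (Set.Icc p.1 p.2 ∩ Set.Icc a b).Nonempty)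
    (hlen : ∀ p ∈ I, ℓ ≤ Real.sqrt (bregman φ p.1 p.2)) :
    (I.card : ℝ) ≤ s ^ 2 / ℓ ^ 2 + 2 := by
  have hdisj' : (I : Set (ℝ × ℝ)).PairwiseDisjoint (fun p ↦ Icc p.1 p.2) := hdisj
  set G := I.filter (fun p ↦ a ≤ p.1 ∧ p.2 ≤ b)
  have hG : (G.card : ℝ) * ℓ ^ 2 ≤ s ^ 2 := calc
    (G.card : ℝ) * ℓ ^ 2 = ∑ _p ∈ G, ℓ ^ 2 := by simp
    _ ≤ ∑ p ∈ G, bregman φ p.1 p.2 := Finset.sum_le_sum fun p hp ↦ by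
      rw [← Real.sq_sqrt (bregman_nonneg hconv.convexOn (hdiff _) _)]
      gcongr
      exact hlen p (Finset.mem_filter.mp hp).1
    _ ≤ bregman φ a b := sum_bregman_le_of_pairwiseDisjoint hconv.convexOn hdiff
      (hdisj'.subset (Finset.coe_subset.mpr (Finset.filter_subset _ _)))
      (fun p hp ↦ nonempty_Icc.mp (hinter p (Finset.mem_filter.mp hp).1).left)
      (fun p hp ↦ (Finset.mem_filter.mp hp).2)
    _ = s ^ 2 := by rw [← hs, Real.sq_sqrt (bregman_nonneg hconv.convexOn (hdiff b) a)]
  have hGcard : (G.card : ℝ) ≤ s ^ 2 / ℓ ^ 2 := by rwa [le_div_iff₀ (by positivity)]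
  have hIcard : (I.card : ℝ) ≤ G.card + 2 := by
    exact_mod_cast card_le_card_filter_subset_add_two hdisj' hinter
  linarith

theorem weak_interval_packing (φ : ℝ → ℝ) (hdiff : Differentiable ℝ φ)
    (hconv : StrictConvexOn ℝ Set.univ φ)
    (a b s ℓ : ℝ) (hab : a ≤ b) (hs : Real.sqrt (bregman φ a b) = s) (hℓ : 0 < ℓ)
    (I : Finset (ℝ × ℝ))
    (hvalid : ∀ p ∈ I, p.1 ≤ p.2)
    (hdisj : ∀ p ∈ I, ∀ q ∈ I, p ≠ q → Disjoint (Set.Icc p.1 p.2) (Set.Icc q.1 q.2))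
    (hinter : ∀ p ∈ I, (Set.Icc p.1 p.2 ∩ Set.Icc a b).Nonempty)
    (hlen : ∀ p ∈ I, ℓ ≤ Real.sqrt (bregman φ p.1 p.2)) :
    (I.card : ℝ) ≤ s ^ 2 / ℓ ^ 2 + 2 :=
  weak_interval_packing_general φ hdiff hconv a b s ℓ hs hℓ I hdisj hinter hlen
end
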